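/- arXiv:2504.03644 — 5 statements merged into one kernel-verified Lean document; each statement's English description precedes it below -/
import Mathlib

section
/- Let G be a finite simple graph with adjacency matrix A over ℂ, and let (θ_1, …, θ_K; E_1, …, E_K) be a spectral decomposition of A. Then for vertices u ≠ v and a real time t, G has quantum fractional revival from u to v at time t if and only if there exist complex numbers α and β with β ≠ 0 and |α|² + |β|² = 1 such that exp(i t θ_r)·(E_r e_u) = α·(E_r e_u) + β·(E_r e_v) for every r ∈ {1, …, K}. -/
open Matrix

/-- The standard basis vector `e_u` in `ℂ^V`. -/
noncomputable def stdVec {V : Type*} (u : V) : V → ℂ :=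
  letI := Classical.decEq V
  Pi.single u 1

/-- The transition matrix `H(t) = exp(i t A)` of a graph with adjacency matrix `A`. -/
noncomputable def transMatrix {V : Type*} [Fintype V] (A : Matrix V V ℂ) (t : ℝ) :
    Matrix V V ℂ :=
  letI := Classical.decEq V
  NormedSpace.exp ((Complex.I * (t : ℂ)) • A)

/-- Quantum fractional revival from `u` to `v` at time `t`. -/
def hasQFR {V : Type*} [Fintype V] (A : Matrix V V ℂ) (u v : V) (t : ℝ) : Prop :=
  u ≠ v ∧ ∃ α β : ℂ, β ≠ 0 ∧
    (transMatrix A t) *ᵥ stdVec u = α • stdVec u + β • stdVec v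

/-- The unitary Cayley graph of a commutative ring: distinct `a, b` are adjacent
iff `a - b` is a unit. -/
def unitaryCayleyGraph (R : Type*) [CommRing R] : SimpleGraph R where
  Adj a b := a ≠ b ∧ IsUnit (a - b)
  symm := ⟨by
    rintro a b ⟨h1, h2⟩
    refine ⟨h1.symm, ?_⟩
    rw [← neg_sub]
    exact h2.neg⟩
  loopless := ⟨fun a h => h.1 rfl⟩

/-- The adjacency matrix (over `ℂ`) of the unitary Cayley graph of `R`. -/
noncomputable def ucMatrix (R : Type*) [CommRing R] : Matrix R R ℂ :=
  letI := Classical.decEq R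
  letI := Classical.decRel (unitaryCayleyGraph R).Adj
  (unitaryCayleyGraph R).adjMatrix ℂ

/-- The adjacency matrix (over `ℂ`) of a simple graph. -/
noncomputable def adjMat {V : Type*} (G : SimpleGraph V) : Matrix V V ℂ :=
  letI := Classical.decEq V
  letI := Classical.decRel G.Adj
  G.adjMatrix ℂ

/-!
Since `A * E_r = θ_r • E_r` and the `E_r` are complete orthogonal idempotents, the power series
of the exponential gives `H(t) = ∑ r, exp(i t θ_r) • E_r`, so `E_r * H(t) = exp(i t θ_r) • E_r`.
A vector is determined by its projections `E_r x`, so `H(t) e_u = α e_u + β e_v` is equivalent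
to the family of projected equations. The normalisation `|α|² + |β|² = 1` is automatic: `H(t)`
is unitary because `A` is Hermitian, and `e_u ⊥ e_v`.
-/

section Algebra

variable {S R : Type*} [CommSemiring S] [Semiring R] [Algebra S R]

theorem pow_mul_of_mul_eq_smul {M x : R} {μ : S} (h : M * x = μ • x) (n : ℕ) :
    M ^ n * x = μ ^ n • x := by
  induction n with
  | zero => simp
  | succ n ih => rw [pow_succ', mul_assoc, ih, mul_smul_comm, h, smul_smul, pow_succ]

namespace OrthogonalIdempotents

variable {ι : Type*} [Fintype ι] {E : ι → R}

theorem sum_smul_mul (hE : OrthogonalIdempotents E) (c : ι → S) (s : ι) :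
    (∑ r, c r • E r) * E s = c s • E s := by
  rw [Finset.sum_mul, Finset.sum_eq_single s]
  · rw [smul_mul_assoc, (hE.idem s).eq]
  · intro r _ hrs
    rw [smul_mul_assoc, hE.ortho hrs, smul_zero]
  · simp

theorem mul_sum_smul (hE : OrthogonalIdempotents E) (c : ι → S) (s : ι) :
    E s * (∑ r, c r • E r) = c s • E s := by
  rw [Finset.mul_sum, Finset.sum_eq_single s]
  · rw [mul_smul_comm, (hE.idem s).eq]
  · intro r _ hrs
    rw [mul_smul_comm, hE.ortho hrs.symm, smul_zero]
  · simp

end OrthogonalIdempotents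

end Algebra

section Exponential

variable {𝕂 𝔸 : Type*} [RCLike 𝕂] [NormedRing 𝔸] [NormedAlgebra 𝕂 𝔸] [CompleteSpace 𝔸]

theorem exp_mul_of_mul_eq_smul {M x : 𝔸} {μ : 𝕂} (h : M * x = μ • x) :
    NormedSpace.exp M * x = NormedSpace.exp μ • x := by
  have hM := (NormedSpace.exp_series_hasSum_exp' (𝕂 := 𝕂) M).mul_right x
  have hμ := (NormedSpace.exp_series_hasSum_exp' (𝕂 := 𝕂) μ).smul_const x
  refine hM.unique (hμ.congr_fun fun n => ?_)
  rw [smul_mul_assoc, pow_mul_of_mul_eq_smul h, smul_smul, smul_eq_mul]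

theorem CompleteOrthogonalIdempotents.exp_sum_smul {ι : Type*} [Fintype ι] {E : ι → 𝔸}
    (hE : CompleteOrthogonalIdempotents E) (μ : ι → 𝕂) :
    NormedSpace.exp (∑ r, μ r • E r) = ∑ r, NormedSpace.exp (μ r) • E r :=
  calc NormedSpace.exp (∑ r, μ r • E r)
      = NormedSpace.exp (∑ r, μ r • E r) * ∑ r, E r := by rw [hE.complete, mul_one]
    _ = ∑ r, NormedSpace.exp (μ r) • E r := by
      rw [Finset.mul_sum]
      exact Finset.sum_congr rfl fun r _ =>
        exp_mul_of_mul_eq_smul (hE.toOrthogonalIdempotents.sum_smul_mul μ r)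

end Exponential

theorem CompleteOrthogonalIdempotents.eq_of_forall_mulVec_eq {ι V α : Type*} [Fintype ι]
    [Fintype V] [DecidableEq V] [Semiring α] {E : ι → Matrix V V α}
    (hE : CompleteOrthogonalIdempotents E) {x y : V → α} (h : ∀ r, E r *ᵥ x = E r *ᵥ y) :
    x = y := by
  rw [← one_mulVec x, ← one_mulVec y, ← hE.complete, sum_mulVec, sum_mulVec]
  exact Finset.sum_congr rfl fun r _ => h r

theorem star_mulVec_dotProduct_mulVec_of_mem_unitary {V α : Type*} [Fintype V] [DecidableEq V]
    [CommSemiring α] [StarRing α] {U : Matrix V V α} (hU : U ∈ unitary (Matrix V V α))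
    (x : V → α) : star (U *ᵥ x) ⬝ᵥ (U *ᵥ x) = star x ⬝ᵥ x := by
  rw [star_mulVec, dotProduct_mulVec, vecMul_vecMul, ← star_eq_conjTranspose,
    Unitary.star_mul_self_of_mem hU, vecMul_one]

-- `stdVec` and `transMatrix` are defined with the classical `DecidableEq V`; these two lemmas
-- restate them for an arbitrary instance.
theorem stdVec_eq {V : Type*} [DecidableEq V] (w : V) : stdVec w = Pi.single w 1 := by
  unfold stdVec
  congr!

theorem transMatrix_eq {V : Type*} [Fintype V] [DecidableEq V] (A : Matrix V V ℂ) (t : ℝ) :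
    transMatrix A t = NormedSpace.exp ((Complex.I * t) • A) := by
  unfold transMatrix
  congr!

section Matrix

variable {V : Type*} [Fintype V] [DecidableEq V]

theorem transMatrix_mem_unitary {A : Matrix V V ℂ} (hA : A.IsHermitian) (t : ℝ) :
    transMatrix A t ∈ unitary (Matrix V V ℂ) := by
  have hX : ((Complex.I * t) • A)ᴴ = -((Complex.I * t) • A) := by
    rw [conjTranspose_smul, hA.eq, ← neg_smul]
    simp [Complex.conj_ofReal]
  rw [mem_unitaryGroup_iff', star_eq_conjTranspose, transMatrix_eq, ← exp_conjTranspose, hX,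
    ← exp_add_of_commute _ _ (Commute.neg_left (Commute.refl ((Complex.I * t) • A))),
    neg_add_cancel, NormedSpace.exp_zero]

theorem transMatrix_eq_sum {ι : Type*} [Fintype ι] {E : ι → Matrix V V ℂ}
    (hE : CompleteOrthogonalIdempotents E) {θ : ι → ℂ} {A : Matrix V V ℂ}
    (hA : ∑ r, θ r • E r = A) (t : ℝ) :
    transMatrix A t = ∑ r, Complex.exp (Complex.I * t * θ r) • E r := by
  have hexp : (Complex.I * t) • A = ∑ r, (Complex.I * t * θ r) • E r := by
    simp only [← hA, Finset.smul_sum, smul_smul]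
  rw [transMatrix_eq, hexp, Complex.exp_eq_exp_ℂ]
  open scoped Norms.Operator in exact hE.exp_sum_smul _

theorem star_stdVec_dotProduct_self (u : V) : star (stdVec u) ⬝ᵥ stdVec u = 1 := by
  simp [stdVec_eq]

theorem star_dotProduct_self_smul_add_smul {u v : V} (huv : u ≠ v) (α β : ℂ) :
    star (α • stdVec u + β • stdVec v) ⬝ᵥ (α • stdVec u + β • stdVec v) =
      ((‖α‖ ^ 2 + ‖β‖ ^ 2 : ℝ) : ℂ) := by
  simp [stdVec_eq, huv, huv.symm, Complex.mul_conj']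

theorem norm_sq_add_norm_sq_eq_one_of_mulVec_stdVec {U : Matrix V V ℂ}
    (hU : U ∈ unitary (Matrix V V ℂ)) {u v : V} (huv : u ≠ v) {α β : ℂ}
    (h : U *ᵥ stdVec u = α • stdVec u + β • stdVec v) : ‖α‖ ^ 2 + ‖β‖ ^ 2 = 1 := by
  have hnorm := star_mulVec_dotProduct_mulVec_of_mem_unitary hU (stdVec u)
  rw [h, star_dotProduct_self_smul_add_smul huv, star_stdVec_dotProduct_self] at hnorm
  exact_mod_cast hnorm

end Matrix

theorem adjMat_isHermitian {V : Type*} (G : SimpleGraph V) : (adjMat G).IsHermitian := by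
  classical
  exact G.isHermitian_adjMatrix ℂ

theorem qfr_iff_projection_condition_general {V : Type*} [Fintype V] [DecidableEq V]
    (G : SimpleGraph V)
    (K : ℕ) (θ : Fin K → ℝ) (E : Fin K → Matrix V V ℂ)
    (horth : ∀ r s, r ≠ s → E r * E s = 0)
    (hsum : ∑ r, E r = (1 : Matrix V V ℂ))
    (hspec : ∑ r, (θ r : ℂ) • E r = adjMat G)
    (u v : V) (huv : u ≠ v) (t : ℝ) :
    hasQFR (adjMat G) u v t ↔
      ∃ α β : ℂ, β ≠ 0 ∧ ‖α‖ ^ 2 + ‖β‖ ^ 2 = 1 ∧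
        ∀ r, Complex.exp (Complex.I * (t : ℂ) * (θ r : ℂ)) • (E r *ᵥ stdVec u) =
          α • (E r *ᵥ stdVec u) + β • (E r *ᵥ stdVec v) := by
  have hE : CompleteOrthogonalIdempotents E :=
    CompleteOrthogonalIdempotents.iff_ortho_complete.mpr ⟨horth, hsum⟩
  have hH := transMatrix_eq_sum hE hspec t
  have hproj : ∀ r, E r *ᵥ (transMatrix (adjMat G) t *ᵥ stdVec u) =
      Complex.exp (Complex.I * t * θ r) • (E r *ᵥ stdVec u) := fun r => by
    rw [mulVec_mulVec, hH, hE.mul_sum_smul, smul_mulVec]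
  constructor
  · rintro ⟨-, α, β, hβ, h⟩
    refine ⟨α, β, hβ, norm_sq_add_norm_sq_eq_one_of_mulVec_stdVec
      (transMatrix_mem_unitary (adjMat_isHermitian G) t) huv h, fun r => ?_⟩
    rw [← hproj, h, mulVec_add, mulVec_smul, mulVec_smul]
  · rintro ⟨α, β, hβ, -, h⟩
    refine ⟨huv, α, β, hβ, hE.eq_of_forall_mulVec_eq fun r => ?_⟩
    rw [hproj, h, mulVec_add, mulVec_smul, mulVec_smul]

/-- QFR at time `t` is equivalent to the eigenprojection condition
`exp(i t θ_r) (E_r e_u) = α (E_r e_u) + β (E_r e_v)` for all `r`. -/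
theorem qfr_iff_projection_condition {V : Type*} [Fintype V] [DecidableEq V]
    (G : SimpleGraph V)
    (K : ℕ) (θ : Fin K → ℝ) (E : Fin K → Matrix V V ℂ)
    (hdist : Function.Injective θ)
    (hherm : ∀ r, (E r).IsHermitian)
    (horth : ∀ r s, r ≠ s → E r * E s = 0)
    (hidem : ∀ r, E r * E r = E r)
    (hsum : ∑ r, E r = (1 : Matrix V V ℂ))
    (hspec : ∑ r, (θ r : ℂ) • E r = adjMat G)
    (u v : V) (huv : u ≠ v) (t : ℝ) :
    hasQFR (adjMat G) u v t ↔
      ∃ α β : ℂ, β ≠ 0 ∧ ‖α‖ ^ 2 + ‖β‖ ^ 2 = 1 ∧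
        ∀ r, Complex.exp (Complex.I * (t : ℂ) * (θ r : ℂ)) • (E r *ᵥ stdVec u) =
          α • (E r *ᵥ stdVec u) + β • (E r *ᵥ stdVec v) :=
  qfr_iff_projection_condition_general G K θ E horth hsum hspec u v huv t
end

section
/- Let R be a finite commutative local ring with identity. If quantum fractional revival occurs in the unitary Cayley graph G_R from a vertex u to a vertex v at some time, then for every spectral decomposition (θ_1, …, θ_K; E_1, …, E_K) of the adjacency matrix of G_R and every r ∈ {1, …, K}, either E_r e_v = E_r e_u or E_r e_v = −E_r e_u. -/
open Matrix

section SpectralDecomposition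

variable {𝕜 M ι : Type*} [Field 𝕜] [Ring M] [Algebra 𝕜 M] [Fintype ι]

lemma OrthogonalIdempotents.mul_sum_smul_s2 {E : ι → M} (hE : OrthogonalIdempotents E)
    (θ : ι → 𝕜) (r : ι) : E r * ∑ s, θ s • E s = θ r • E r := by
  classical
  simp [Finset.mul_sum, hE.mul_eq]

lemma OrthogonalIdempotents.sum_smul_mul_s2 {E : ι → M} (hE : OrthogonalIdempotents E)
    (θ : ι → 𝕜) (r : ι) : (∑ s, θ s • E s) * E r = θ r • E r := by
  classical
  simp [Finset.sum_mul, hE.mul_eq]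

lemma eq_of_sum_eq_one_of_mul_eq_smul {E F : ι → M} {θ : ι → 𝕜} {A : M}
    (hθ : Function.Injective θ) (hE : ∑ s, E s = 1) (hF : ∑ s, F s = 1)
    (hAE : ∀ s, A * E s = θ s • E s) (hFA : ∀ s, F s * A = θ s • F s) : F = E := by
  have hFE : ∀ s s', s ≠ s' → F s * E s' = 0 := by
    intro s s' hss'
    have h : (θ s - θ s') • (F s * E s') = 0 := by
      rw [sub_smul, ← smul_mul_assoc, ← hFA, ← mul_smul_comm, ← hAE, mul_assoc, sub_self]
    exact (smul_eq_zero.mp h).resolve_left (sub_ne_zero.mpr (hθ.ne hss'))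
  funext r
  calc F r = ∑ s, F r * E s := by rw [← Finset.mul_sum, hE, mul_one]
    _ = ∑ s, F s * E r := by
      rw [Finset.sum_eq_single_of_mem r (Finset.mem_univ r) fun s _ hs => hFE r s hs.symm,
        Finset.sum_eq_single_of_mem r (Finset.mem_univ r) fun s _ hs => hFE s r hs]
    _ = E r := by rw [← Finset.sum_mul, hF, one_mul]

lemma CompleteOrthogonalIdempotents.apply_eq_of_apply_sum_smul_eq {E : ι → M}
    (hE : CompleteOrthogonalIdempotents E) {θ : ι → 𝕜} (hθ : Function.Injective θ)
    {F : Type*} [FunLike F M M] [AlgHomClass F 𝕜 M M] (φ : F)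
    (hφ : φ (∑ s, θ s • E s) = ∑ s, θ s • E s) (r : ι) : φ (E r) = E r := by
  have hφE : (fun s => φ (E s)) = E :=
    eq_of_sum_eq_one_of_mul_eq_smul hθ hE.complete
      (by rw [← map_sum, hE.complete, map_one]) (hE.sum_smul_mul_s2 θ)
      fun s => by rw [← hφ, ← map_mul, hE.mul_sum_smul_s2, map_smul]
  exact congrFun hφE r

end SpectralDecomposition

lemma mul_exp_of_mul_eq_smul {𝔸 : Type*} [NormedRing 𝔸] [NormedAlgebra ℂ 𝔸] [CompleteSpace 𝔸]
    {P S : 𝔸} {c : ℂ} (h : P * S = c • P) : P * NormedSpace.exp S = Complex.exp c • P := by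
  have hpow : ∀ k : ℕ, P * S ^ k = c ^ k • P := by
    intro k
    induction k with
    | zero => simp
    | succ k ih => rw [pow_succ, ← mul_assoc, ih, smul_mul_assoc, h, smul_smul, ← pow_succ]
  have hterm : (fun k : ℕ => P * ((k.factorial : ℂ)⁻¹ • S ^ k)) =
      fun k => ((k.factorial : ℂ)⁻¹ • c ^ k) • P := by
    funext k
    rw [mul_smul_comm, hpow, smul_smul, smul_eq_mul]
  have hseries := (NormedSpace.exp_series_hasSum_exp' (𝕂 := ℂ) S).mul_left P
  rw [hterm] at hseries
  rw [Complex.exp_eq_exp_ℂ]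
  exact hseries.unique ((NormedSpace.exp_series_hasSum_exp' (𝕂 := ℂ) c).smul_const P)

lemma mul_transMatrix_of_mul_eq_smul {V : Type*} [Fintype V] {A P : Matrix V V ℂ} {c : ℂ}
    (h : P * A = c • P) (t : ℝ) :
    P * transMatrix A t = Complex.exp (Complex.I * t * c) • P := by
  classical
  let _ := Matrix.linftyOpNormedRing (n := V) (α := ℂ)
  let _ := Matrix.linftyOpNormedAlgebra (R := ℂ) (n := V) (α := ℂ)
  exact mul_exp_of_mul_eq_smul (by rw [mul_smul_comm, h, smul_smul])

lemma stdVec_comp_equiv {V W : Type*} (σ : V ≃ W) (w : W) :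
    stdVec w ∘ σ = stdVec (σ.symm w) := by
  classical
  funext a
  simp [stdVec, Pi.single_apply, Equiv.eq_symm_apply]

lemma mulVec_comp_of_reindex_eq {V α : Type*} [Fintype V] [NonUnitalNonAssocSemiring α]
    {M : Matrix V V α} {σ : V ≃ V} (hM : reindex σ σ M = M) (w : V → α) :
    M *ᵥ (w ∘ σ) = (M *ᵥ w) ∘ σ := by
  conv_rhs => rw [← hM]
  rw [reindex_apply, submatrix_mulVec_equiv]
  simp [Function.comp_assoc]

lemma eq_or_eq_neg_of_smul_eq_of_swap {𝕜 V : Type*} [Field 𝕜] [NeZero (2 : 𝕜)]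
    [AddCommGroup V] [Module 𝕜 V] (T : V →ₗ[𝕜] V) {x y : V} (hTx : T x = y) (hTy : T y = x)
    {l α β : 𝕜} (hβ : β ≠ 0) (h : l • x = α • x + β • y) : y = x ∨ y = -x := by
  have h' : l • y = α • y + β • x := by simpa [hTx, hTy] using congrArg T h
  by_contra! hne
  have hsum : (l - (α + β)) • (x + y) = 0 := by
    linear_combination (norm := module) h + h'
  have hdiff : (l - (α - β)) • (x - y) = 0 := by
    linear_combination (norm := module) h - h'
  have hl₁ := (smul_eq_zero.mp hsum).resolve_right fun h0 => hne.2 (eq_neg_of_add_eq_zero_right h0)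
  have hl₂ := (smul_eq_zero.mp hdiff).resolve_right fun h0 => hne.1 (sub_eq_zero.mp h0).symm
  have h2β : (2 : 𝕜) * β = 0 := by linear_combination hl₂ - hl₁
  exact hβ ((mul_eq_zero.mp h2β).resolve_left two_ne_zero)

def unitaryCayleyGraph.subLeftIso {R : Type*} [CommRing R] (c : R) :
    unitaryCayleyGraph R ≃g unitaryCayleyGraph R where
  toEquiv := Equiv.subLeft c
  map_rel_iff' {a b} := by
    show (c - a ≠ c - b ∧ IsUnit (c - a - (c - b))) ↔ (a ≠ b ∧ IsUnit (a - b))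
    rw [sub_sub_sub_cancel_left, Ne, sub_right_inj, ← neg_sub a b, IsUnit.neg_iff]

lemma ucMatrix_reindex_subLeft {R : Type*} [CommRing R] (c : R) :
    reindex (Equiv.subLeft c) (Equiv.subLeft c) (ucMatrix R) = ucMatrix R := by
  let _ := Classical.decRel (unitaryCayleyGraph R).Adj
  exact (unitaryCayleyGraph.subLeftIso c).reindex_adjMatrix ℂ

theorem qfr_local_ring_plus_minus_general (R : Type*) [CommRing R]
    [Fintype R] [DecidableEq R]
    (u v : R) (t : ℝ) (h : hasQFR (ucMatrix R) u v t)
    (K : ℕ) (θ : Fin K → ℝ) (E : Fin K → Matrix R R ℂ)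
    (hdist : Function.Injective θ)
    (horth : ∀ r s, r ≠ s → E r * E s = 0)
    (hidem : ∀ r, E r * E r = E r)
    (hsum : ∑ r, E r = (1 : Matrix R R ℂ))
    (hspec : ∑ r, (θ r : ℂ) • E r = ucMatrix R) :
    ∀ r, E r *ᵥ stdVec v = E r *ᵥ stdVec u ∨
      E r *ᵥ stdVec v = -(E r *ᵥ stdVec u) := by
  obtain ⟨-, α, β, hβ, hrevival⟩ := h
  have hE : CompleteOrthogonalIdempotents E := ⟨⟨hidem, horth⟩, hsum⟩
  intro r
  set σ := Equiv.subLeft (u + v)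
  have hAσ : reindexAlgEquiv ℂ ℂ σ (∑ s, (θ s : ℂ) • E s) = ∑ s, (θ s : ℂ) • E s := by
    rw [hspec]
    exact ucMatrix_reindex_subLeft _
  have hEσ : reindex σ σ (E r) = E r :=
    hE.apply_eq_of_apply_sum_smul_eq (Complex.ofReal_injective.comp hdist) _ hAσ r
  have hswap : ∀ w, (E r *ᵥ stdVec w) ∘ σ = E r *ᵥ stdVec (u + v - w) := fun w => by
    rw [← mulVec_comp_of_reindex_eq hEσ, stdVec_comp_equiv]
    congr 2
    exact neg_add_eq_sub w (u + v)
  have hEA : E r * ucMatrix R = (θ r : ℂ) • E r := hspec ▸ hE.mul_sum_smul_s2 _ r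
  have hrevival_r : Complex.exp (Complex.I * t * θ r) • (E r *ᵥ stdVec u) =
      α • (E r *ᵥ stdVec u) + β • (E r *ᵥ stdVec v) := by
    rw [← smul_mulVec, ← mul_transMatrix_of_mul_eq_smul hEA t, ← mulVec_mulVec, hrevival,
      mulVec_add, mulVec_smul, mulVec_smul]
  exact eq_or_eq_neg_of_smul_eq_of_swap (LinearMap.funLeft ℂ ℂ σ)
    ((hswap u).trans (by rw [add_sub_cancel_left]))
    ((hswap v).trans (by rw [add_sub_cancel_right])) hβ hrevival_r

/-- over a finite commutative local ring, QFR forces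
`E_r e_v = ± E_r e_u` for every spectral projection. -/
theorem qfr_local_ring_plus_minus (R : Type*) [CommRing R] [IsLocalRing R]
    [Fintype R] [DecidableEq R]
    (u v : R) (t : ℝ) (h : hasQFR (ucMatrix R) u v t)
    (K : ℕ) (θ : Fin K → ℝ) (E : Fin K → Matrix R R ℂ)
    (hdist : Function.Injective θ)
    (hherm : ∀ r, (E r).IsHermitian)
    (horth : ∀ r s, r ≠ s → E r * E s = 0)
    (hidem : ∀ r, E r * E r = E r)
    (hsum : ∑ r, E r = (1 : Matrix R R ℂ))
    (hspec : ∑ r, (θ r : ℂ) • E r = ucMatrix R) :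
    ∀ r, E r *ᵥ stdVec v = E r *ᵥ stdVec u ∨
      E r *ᵥ stdVec v = -(E r *ᵥ stdVec u) :=
  qfr_local_ring_plus_minus_general R u v t h K θ E hdist horth hidem hsum hspec
end

section
/- Let R be a finite commutative local ring with identity whose unique maximal ideal M has cardinality m. If quantum fractional revival occurs in the unitary Cayley graph G_R from some vertex to another at some time, then m = 1 or m = 2. -/
open Matrix

/-!
In a local ring the non-units form the maximal ideal `M`, so the adjacency matrix of `G_R` is
`J - K`, where `J` is the all-ones matrix and `K a b = 1` iff `a - b ∈ M`. The relations
`J² = |R| J`, `JK = KJ = |M| J` and `K² = |M| K` make `span {1, J, K}` a subalgebra; being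
finite-dimensional it is closed, so it contains `H(t) = exp(itA)`. The `u`-th column of
`x • 1 + y • J + z • K` is constant on `(u + M) \ {u}` and on the complement of `u + M`. If
`|M| ≥ 3`, a vertex of `u + M` (when `v ∈ u + M`) or of `v + M` (otherwise) other than `u`
and `v` then forces the `v`-entry of the column to vanish.
-/

theorem NormedSpace.exp_mem_of_finiteDimensional {𝕜 A : Type*} [NontriviallyNormedField 𝕜]
    [CompleteSpace 𝕜] [Ring A] [Algebra 𝕜 A] [TopologicalSpace A] [IsTopologicalRing A]
    [T2Space A] [ContinuousSMul 𝕜 A] [FiniteDimensional 𝕜 A] [Algebra ℚ A]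
    [IsScalarTower ℚ 𝕜 A] (S : Subalgebra 𝕜 A) {x : A} (hx : x ∈ S) :
    NormedSpace.exp x ∈ S :=
  NormedSpace.exp_mem (R := 𝕜) (s := S) (Subalgebra.toSubmodule S).closed_of_finiteDimensional hx

theorem of_one_mul_of_one {n 𝕜 : Type*} [Fintype n] [Semiring 𝕜] :
    (of 1 * of 1 : Matrix n n 𝕜) = (Fintype.card n : 𝕜) • of 1 := by
  ext a b
  simp [mul_apply]

theorem Finite.exists_ne_ne_of_two_lt_card {α : Type*} [Finite α] (h : 2 < Nat.card α)
    (a b : α) : ∃ c, c ≠ a ∧ c ≠ b := by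
  classical
  have := Fintype.ofFinite α
  rw [Nat.card_eq_fintype_card, ← Finset.card_univ] at h
  obtain ⟨c, -, hc⟩ :=
    Finset.exists_mem_notMem_of_card_lt_card ((Finset.card_le_two (a := a) (b := b)).trans_lt h)
  exact ⟨c, by simpa [not_or] using hc⟩

section CosetMatrix

variable {G 𝕜 : Type*} [Semiring 𝕜] [AddCommGroup G] (H : AddSubgroup G)
  [DecidablePred (· ∈ H)]

def cosetMatrix : Matrix G G 𝕜 :=
  of fun a b => if a - b ∈ H then 1 else 0

theorem cosetMatrix_apply (a b : G) :
    (cosetMatrix H a b : 𝕜) = if a - b ∈ H then 1 else 0 :=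
  rfl

theorem cosetMatrix_comm (a b : G) : (cosetMatrix H a b : 𝕜) = cosetMatrix H b a := by
  simp only [cosetMatrix_apply, sub_mem_comm_iff]

variable [Fintype G]

theorem sum_cosetMatrix_apply_left (b : G) : ∑ x, (cosetMatrix H x b : 𝕜) = Nat.card H := by
  calc ∑ x, (cosetMatrix H x b : 𝕜) = ∑ x, if x ∈ H then (1 : 𝕜) else 0 :=
        (Equiv.subRight b).sum_comp fun x => if x ∈ H then (1 : 𝕜) else 0
    _ = Nat.card H := by
      rw [Finset.sum_boole, Nat.card_eq_fintype_card, Fintype.card_subtype]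

theorem sum_cosetMatrix_apply_right (a : G) : ∑ x, (cosetMatrix H a x : 𝕜) = Nat.card H := by
  simp only [cosetMatrix_comm H a, sum_cosetMatrix_apply_left]

theorem of_one_mul_cosetMatrix :
    (of 1 : Matrix G G 𝕜) * cosetMatrix H = (Nat.card H : 𝕜) • of 1 := by
  ext a b
  simp [mul_apply, sum_cosetMatrix_apply_left]

theorem cosetMatrix_mul_of_one :
    cosetMatrix H * (of 1 : Matrix G G 𝕜) = (Nat.card H : 𝕜) • of 1 := by
  ext a b
  simp [mul_apply, sum_cosetMatrix_apply_right]

theorem cosetMatrix_mul_self :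
    (cosetMatrix H * cosetMatrix H : Matrix G G 𝕜) = (Nat.card H : 𝕜) • cosetMatrix H := by
  ext a b
  have same_coset (x : G) : (cosetMatrix H a x * cosetMatrix H x b : 𝕜) =
      cosetMatrix H a b * cosetMatrix H x b := by
    by_cases hx : x - b ∈ H
    · have : a - x ∈ H ↔ a - b ∈ H := by
        rw [← sub_add_sub_cancel a x b, add_mem_cancel_right hx]
      simp [cosetMatrix_apply, this]
    · simp [cosetMatrix_apply, hx]
  rw [mul_apply, Finset.sum_congr rfl fun x _ => same_coset x, ← Finset.mul_sum,
    sum_cosetMatrix_apply_left, Matrix.smul_apply, smul_eq_mul, Nat.cast_comm]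

theorem card_le_two_of_mulVec_single_eq [DecidableEq G] {a b c α β : 𝕜} {u v : G}
    (huv : u ≠ v) (hβ : β ≠ 0)
    (hcol : (a • 1 + b • of 1 + c • cosetMatrix H : Matrix G G 𝕜) *ᵥ Pi.single u 1 =
      α • Pi.single u 1 + β • Pi.single v 1) :
    Nat.card H ≤ 2 := by
  have entry (w : G) (hw : w ≠ u) :
      b + c * (if w - u ∈ H then 1 else 0) = if w = v then β else 0 := by
    simpa [mulVec_single_one, cosetMatrix_apply, hw, Pi.single_apply] using congrFun hcol w
  by_contra! hH
  have hv := entry v huv.symm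
  rw [if_pos rfl] at hv
  apply hβ
  by_cases hvu : v - u ∈ H
  · obtain ⟨⟨h, hh⟩, hh0, hhv⟩ := Finite.exists_ne_ne_of_two_lt_card hH 0 ⟨v - u, hvu⟩
    have hw := entry (h + u) (by simpa using hh0)
    rw [add_sub_cancel_right, if_pos hh,
      if_neg fun e => hhv (Subtype.ext (eq_sub_of_add_eq e))] at hw
    rw [← hv, if_pos hvu, hw]
  · have : Nontrivial H := Finite.one_lt_card_iff_nontrivial.mp (by omega)
    obtain ⟨⟨h, hh⟩, hh0⟩ := exists_ne (0 : H)
    have hout : h + v - u ∉ H := by rwa [add_sub_assoc, add_mem_cancel_left hh]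
    have hw := entry (h + v) fun e => hout (by simp [e])
    rw [if_neg hout, if_neg (by simpa using hh0)] at hw
    rw [← hv, if_neg hvu, hw]

end CosetMatrix

theorem exists_eq_of_mem_adjoin_cosetMatrix {G 𝕜 : Type*} [CommSemiring 𝕜] [AddCommGroup G]
    [Fintype G] [DecidableEq G] (H : AddSubgroup G) [DecidablePred (· ∈ H)]
    {X : Matrix G G 𝕜} (hX : X ∈ Algebra.adjoin 𝕜 {of 1, cosetMatrix H}) :
    ∃ a b c : 𝕜, X = a • 1 + b • of 1 + c • cosetMatrix H := by
  induction hX using Algebra.adjoin_induction with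
  | mem X hX =>
    rcases hX with rfl | rfl
    · exact ⟨0, 1, 0, by simp⟩
    · exact ⟨0, 0, 1, by simp⟩
  | algebraMap r => exact ⟨r, 0, 0, by simp [Algebra.algebraMap_eq_smul_one]⟩
  | add X Y _ _ hX hY =>
    obtain ⟨a, b, c, rfl⟩ := hX
    obtain ⟨a', b', c', rfl⟩ := hY
    exact ⟨a + a', b + b', c + c', by module⟩
  | mul X Y _ _ hX hY =>
    obtain ⟨a, b, c, rfl⟩ := hX
    obtain ⟨a', b', c', rfl⟩ := hY
    refine ⟨a * a', a * b' + b * a' + b * b' * Fintype.card G + (b * c' + c * b') * Nat.card H,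
      a * c' + c * a' + c * c' * Nat.card H, ?_⟩
    simp only [add_mul, mul_add, smul_mul_smul_comm, one_mul, mul_one, of_one_mul_of_one,
      of_one_mul_cosetMatrix, cosetMatrix_mul_of_one, cosetMatrix_mul_self, smul_smul]
    module

theorem unitaryCayleyGraph_adj_iff_sub_notMem_maximalIdeal {R : Type*} [CommRing R]
    [IsLocalRing R] (a b : R) :
    (unitaryCayleyGraph R).Adj a b ↔ a - b ∉ IsLocalRing.maximalIdeal R := by
  rw [IsLocalRing.mem_maximalIdeal, mem_nonunits_iff, not_not]
  refine ⟨And.right, fun hu => ⟨fun hab => ?_, hu⟩⟩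
  rw [hab, sub_self] at hu
  exact not_isUnit_zero hu

theorem ucMatrix_eq_sub_cosetMatrix {R : Type*} [CommRing R] [IsLocalRing R]
    [DecidablePred (· ∈ IsLocalRing.maximalIdeal R)] :
    ucMatrix R = of 1 - cosetMatrix (IsLocalRing.maximalIdeal R).toAddSubgroup := by
  ext a b
  by_cases h : a - b ∈ IsLocalRing.maximalIdeal R <;>
    simp [ucMatrix, SimpleGraph.adjMatrix_apply,
      unitaryCayleyGraph_adj_iff_sub_notMem_maximalIdeal, cosetMatrix_apply, h]

/-- if QFR occurs in the unitary Cayley graph of a finite local ring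
whose maximal ideal has cardinality `m`, then `m = 1` or `m = 2`. -/
theorem qfr_local_ring_maximal_ideal_card (R : Type*) [CommRing R] [IsLocalRing R]
    [Fintype R] (m : ℕ)
    (hm : Nat.card (IsLocalRing.maximalIdeal R) = m)
    (h : ∃ u v t, hasQFR (ucMatrix R) u v t) :
    m = 1 ∨ m = 2 := by
  classical
  obtain ⟨u, v, t, huv, α, β, hβ, hcol⟩ := h
  set H := (IsLocalRing.maximalIdeal R).toAddSubgroup
  have hA : ucMatrix R ∈ Algebra.adjoin ℂ {of 1, cosetMatrix H} := by
    rw [ucMatrix_eq_sub_cosetMatrix]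
    exact sub_mem (Algebra.subset_adjoin (Set.mem_insert _ _))
      (Algebra.subset_adjoin (Set.mem_insert_of_mem _ rfl))
  obtain ⟨a, b, c, hexp⟩ : ∃ a b c : ℂ,
      transMatrix (ucMatrix R) t = a • 1 + b • of 1 + c • cosetMatrix H :=
    exists_eq_of_mem_adjoin_cosetMatrix H
      (NormedSpace.exp_mem_of_finiteDimensional _ (Subalgebra.smul_mem _ hA (Complex.I * t)))
  rw [hexp] at hcol
  have hle : m ≤ 2 := hm ▸ card_le_two_of_mulVec_single_eq H huv hβ hcol
  have hpos : 0 < m := hm ▸ Nat.card_pos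
  omega
end

section
/- Let F be a finite field. Quantum fractional revival occurs in the unitary Cayley graph G_F (from some vertex to another at some time) if and only if F has exactly 2 elements. -/
/-!
Over a field every nonzero difference is a unit, so `G_F` is the complete graph: its adjacency
matrix, hence also `H(t)`, is invariant under every permutation of the vertices. If QFR goes
from `u` to `v` and `w ∉ {u, v}`, the transposition of `v` and `w` fixes `u`, so
`H(t)_{wu} = H(t)_{vu} ≠ 0`, contradicting `H(t) e_u ∈ span {e_u, e_v}`. Conversely the adjacency
matrix of `K₂` is an involution, so `H(t) = cos t + i sin t A` and `H(π/2) e_u = i e_v`.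
-/

open Matrix

open NormedSpace SimpleGraph Real

section Involution

variable {𝔸 : Type*} [Ring 𝔸] [Algebra ℂ 𝔸] {a : 𝔸}

/-- `(p, q) ↦ p e + q f` for the orthogonal idempotents `e, f = (1 ± a) / 2`. -/
noncomputable def algHomOfMulSelfEqOne (a : 𝔸) (ha : a * a = 1) : ℂ × ℂ →ₐ[ℂ] 𝔸 where
  toFun p := ((p.1 + p.2) / 2) • 1 + ((p.1 - p.2) / 2) • a
  map_one' := by norm_num
  map_mul' p q := by
    simp only [Prod.fst_mul, Prod.snd_mul, add_mul, mul_add, smul_mul_smul_comm, ha, one_mul,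
      mul_one]
    module
  map_zero' := by norm_num
  map_add' p q := by
    simp only [Prod.fst_add, Prod.snd_add]
    module
  commutes' r := by
    simp only [Algebra.algebraMap_eq_smul_one, Prod.smul_fst, Prod.smul_snd, Prod.fst_one,
      Prod.snd_one, smul_eq_mul, mul_one]
    module

theorem algHomOfMulSelfEqOne_apply (ha : a * a = 1) (p : ℂ × ℂ) :
    algHomOfMulSelfEqOne a ha p = ((p.1 + p.2) / 2) • 1 + ((p.1 - p.2) / 2) • a := rfl

end Involution

theorem exp_smul_of_mul_self_eq_one {𝔸 : Type*} [NormedRing 𝔸] [NormedAlgebra ℂ 𝔸]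
    [NormedAlgebra ℚ 𝔸] [CompleteSpace 𝔸] {a : 𝔸} (ha : a * a = 1) (z : ℂ) :
    exp (z • a) = Complex.cosh z • 1 + Complex.sinh z • a := by
  have hcont : Continuous (algHomOfMulSelfEqOne a ha) :=
    (((continuous_fst.add continuous_snd).div_const 2).smul continuous_const).add
      (((continuous_fst.sub continuous_snd).div_const 2).smul continuous_const)
  have hza : z • a = algHomOfMulSelfEqOne a ha (z, -z) := by
    simp [algHomOfMulSelfEqOne_apply]
  have hexp : exp ((z, -z) : ℂ × ℂ) = (Complex.exp z, Complex.exp (-z)) := by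
    ext <;> simp [Complex.exp_eq_exp_ℂ]
  rw [hza, ← map_exp _ hcont, hexp, algHomOfMulSelfEqOne_apply, ← Complex.two_cosh,
    ← Complex.two_sinh]
  simp

namespace Matrix

variable {m n : Type*} [Fintype m] [DecidableEq m] [Fintype n] [DecidableEq n]

theorem exp_submatrix_equiv (e : n ≃ m) (A : Matrix m m ℂ) :
    exp (A.submatrix e e) = (exp A).submatrix e e := by
  -- any norm will do; the `ℂ`-algebra structure is what makes the space complete
  let : NormedRing (Matrix m m ℂ) := Matrix.linftyOpNormedRing
  let : NormedAlgebra ℂ (Matrix m m ℂ) := Matrix.linftyOpNormedAlgebra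
  let : NormedAlgebra ℚ (Matrix m m ℂ) := Matrix.linftyOpNormedAlgebra
  let : NormedRing (Matrix n n ℂ) := Matrix.linftyOpNormedRing
  let : NormedAlgebra ℚ (Matrix n n ℂ) := Matrix.linftyOpNormedAlgebra
  exact (map_exp (reindexAlgEquiv ℚ ℂ e.symm) (continuous_id.matrix_submatrix e e) A).symm

theorem exp_smul_of_mul_self_eq_one {A : Matrix m m ℂ} (hA : A * A = 1) (z : ℂ) :
    exp (z • A) = Complex.cosh z • 1 + Complex.sinh z • A := by
  let : NormedRing (Matrix m m ℂ) := Matrix.linftyOpNormedRing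
  let : NormedAlgebra ℂ (Matrix m m ℂ) := Matrix.linftyOpNormedAlgebra
  let : NormedAlgebra ℚ (Matrix m m ℂ) := Matrix.linftyOpNormedAlgebra
  exact _root_.exp_smul_of_mul_self_eq_one hA z

end Matrix

section TransitionMatrix

variable {V : Type*} [Fintype V]

theorem transMatrix_submatrix (A : Matrix V V ℂ) (σ : Equiv.Perm V) (t : ℝ) :
    transMatrix (A.submatrix σ σ) t = (transMatrix A t).submatrix σ σ := by
  classical
  rw [transMatrix, transMatrix]
  exact Matrix.exp_submatrix_equiv σ ((Complex.I * t) • A)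

theorem transMatrix_of_mul_self_eq_one [inst : DecidableEq V] {A : Matrix V V ℂ}
    (hA : A * A = 1) (t : ℝ) :
    transMatrix A t = (Real.cos t : ℂ) • 1 + (Complex.I * Real.sin t) • A := by
  rw [transMatrix, Subsingleton.elim (Classical.decEq V) inst,
    Matrix.exp_smul_of_mul_self_eq_one hA, mul_comm, Complex.cosh_mul_I, Complex.sinh_mul_I,
    mul_comm, Complex.ofReal_cos, Complex.ofReal_sin]

theorem transMatrix_mulVec_stdVec (A : Matrix V V ℂ) (t : ℝ) (u : V) :
    transMatrix A t *ᵥ stdVec u = fun x ↦ transMatrix A t x u := by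
  classical
  ext x
  simp [stdVec, mulVec, dotProduct, Pi.single_apply]

end TransitionMatrix

section QuantumFractionalRevival

variable {V : Type*} [Fintype V] {A : Matrix V V ℂ} {u v : V} {t : ℝ}

theorem hasQFR.perm_apply_eq_of_apply_eq (h : hasQFR A u v t) {σ : Equiv.Perm V}
    (hσ : A.submatrix σ σ = A) (hu : σ u = u) : σ v = v := by
  obtain ⟨huv, α, β, hβ, hH⟩ := h
  have hcol (x : V) : transMatrix A t x u = α * stdVec u x + β * stdVec v x := by
    simpa [transMatrix_mulVec_stdVec] using congrFun hH x
  have hinv (x y : V) : transMatrix A t (σ x) (σ y) = transMatrix A t x y := by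
    simpa [hσ] using (congr_fun₂ (transMatrix_submatrix A σ t) x y).symm
  by_contra hv
  have hσvu : σ v ≠ u := fun h ↦ huv (σ.injective (hu.trans h.symm))
  apply hβ
  calc β = transMatrix A t v u := by simp [hcol, stdVec, huv.symm]
    _ = transMatrix A t (σ v) u := by rw [← hinv v u, hu]
    _ = 0 := by simp [hcol, stdVec, hσvu, hv]

theorem hasQFR_of_mul_self_eq_one [DecidableEq V] (hA : A * A = 1) (huv : u ≠ v)
    (hAu : A *ᵥ stdVec u = stdVec v) : hasQFR A u v (π / 2) := by
  refine ⟨huv, 0, Complex.I, Complex.I_ne_zero, ?_⟩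
  rw [transMatrix_of_mul_self_eq_one hA, Real.cos_pi_div_two, Real.sin_pi_div_two]
  simp [smul_mulVec, hAu]

end QuantumFractionalRevival

namespace SimpleGraph

variable {V W α : Type*} [DecidableEq V]

theorem adjMatrix_completeGraph_submatrix [DecidableEq W] [Zero α] [One α] {f : W → V}
    (hf : Function.Injective f) :
    ((completeGraph V).adjMatrix α).submatrix f f = (completeGraph W).adjMatrix α := by
  ext x y
  simp [hf.ne_iff]

variable [Fintype V]

theorem adjMatrix_completeGraph_mul_self_of_card_eq_two [NonAssocRing α]
    (h : Fintype.card V = 2) :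
    (completeGraph V).adjMatrix α * (completeGraph V).adjMatrix α = 1 := by
  have hJ : (of 1 : Matrix V V α) * of 1 = 2 • of 1 := by
    ext
    simp [mul_apply, h]
  rw [adjMatrix_completeGraph_eq_of_one_sub_one, sub_mul, mul_sub, mul_sub, hJ, two_nsmul]
  simp

end SimpleGraph

section CompleteGraph

variable {V : Type*} [Fintype V] [DecidableEq V] {u v : V} {t : ℝ}

theorem eq_or_eq_of_hasQFR_completeGraph
    (h : hasQFR ((completeGraph V).adjMatrix ℂ) u v t) (w : V) : w = u ∨ w = v := by
  by_contra! hw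
  have hfix := h.perm_apply_eq_of_apply_eq (σ := Equiv.swap v w)
    (adjMatrix_completeGraph_submatrix (Equiv.swap v w).injective)
    (Equiv.swap_apply_of_ne_of_ne h.1 hw.1.symm)
  exact hw.2 (by simpa using hfix)

theorem card_eq_two_of_hasQFR_completeGraph
    (h : hasQFR ((completeGraph V).adjMatrix ℂ) u v t) : Fintype.card V = 2 := by
  refine le_antisymm ?_ (Fintype.one_lt_card_iff.2 ⟨u, v, h.1⟩)
  calc Fintype.card V = (Finset.univ : Finset V).card := Finset.card_univ.symm
    _ ≤ ({u, v} : Finset V).card :=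
      Finset.card_le_card fun w _ ↦ by simpa using eq_or_eq_of_hasQFR_completeGraph h w
    _ ≤ 2 := Finset.card_le_two

theorem hasQFR_completeGraph_of_card_eq_two (h : Fintype.card V = 2) (huv : u ≠ v) :
    hasQFR ((completeGraph V).adjMatrix ℂ) u v (π / 2) := by
  refine hasQFR_of_mul_self_eq_one
    (adjMatrix_completeGraph_mul_self_of_card_eq_two h) huv ?_
  have huniv : ({u, v} : Finset V) = Finset.univ :=
    Finset.eq_univ_of_card _ (by rw [Finset.card_pair huv, h])
  ext x
  have hx : x ∈ ({u, v} : Finset V) := huniv ▸ Finset.mem_univ x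
  rw [Finset.mem_insert, Finset.mem_singleton] at hx
  rcases hx with rfl | rfl <;> simp [stdVec, huv, huv.symm]

end CompleteGraph

theorem ucMatrix_eq_adjMatrix_completeGraph (F : Type*) [Field F] [DecidableEq F] :
    ucMatrix F = (completeGraph F).adjMatrix ℂ := by
  ext a b
  simp [ucMatrix, unitaryCayleyGraph, sub_ne_zero]

/-- for a finite field `F`, QFR occurs in `G_F` iff `|F| = 2`. -/
theorem qfr_finite_field_iff_card_two (F : Type*) [Field F] [Fintype F] :
    (∃ u v t, hasQFR (ucMatrix F) u v t) ↔ Fintype.card F = 2 := by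
  classical
  rw [ucMatrix_eq_adjMatrix_completeGraph]
  exact ⟨fun ⟨_, _, _, h⟩ ↦ card_eq_two_of_hasQFR_completeGraph h,
    fun h ↦ ⟨0, 1, _, hasQFR_completeGraph_of_card_eq_two h zero_ne_one⟩⟩
end

section
/- Let F be a finite field of odd cardinality q. Then for every integer k, the unitary Cayley graph of the product ring F × ℤ/4ℤ does not have quantum fractional revival from any vertex u to any vertex v at time τ = kπ/q. -/
open Matrix

/-! The adjacency matrix of `G_{F × ℤ/4}` is `(J - I) ⊗ C`, where `C` is the 4-cycle
`G_{ℤ/4}` and `J = q E` with `E` the averaging projection. Hence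
`exp (i t (J - I) ⊗ C) = exp (i q t E ⊗ C) · exp (-i t I ⊗ C)`, and at `t = kπ/q` the first
factor is the identity because `C` has the even eigenvalues `2, 0, -2`. With `ζ = e^{2it}`, the
column of `u` then carries the value `(ζ⁻¹ - ζ) / 4` at both `ℤ/4`-neighbours of `u`, one of
which is not `v`, so fractional revival forces `ζ⁻¹ = ζ`. As `ζ^q = 1` with `q` odd, `ζ = 1`,
and the transition matrix is the identity, which has no fractional revival. -/

open NormedSpace Kronecker
open Complex (I)

namespace Matrix

variable {l m n p α : Type*}

theorem sub_kronecker [NonUnitalNonAssocRing α] (A B : Matrix l m α) (C : Matrix n p α) :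
    (A - B) ⊗ₖ C = A ⊗ₖ C - B ⊗ₖ C := by
  ext; simp [sub_mul]

theorem kronecker_sub [NonUnitalNonAssocRing α] (A : Matrix l m α) (B C : Matrix n p α) :
    A ⊗ₖ (B - C) = A ⊗ₖ B - A ⊗ₖ C := by
  ext; simp [mul_sub]

theorem isIdempotentElem_kronecker [CommSemiring α] [Fintype m] [Fintype n]
    {A : Matrix m m α} {B : Matrix n n α} (hA : IsIdempotentElem A) (hB : IsIdempotentElem B) :
    IsIdempotentElem (A ⊗ₖ B) := by
  rw [IsIdempotentElem, ← mul_kronecker_mul, hA.eq, hB.eq]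

theorem kronecker_mul_kronecker_eq_zero [CommSemiring α] [Fintype m] [Fintype n]
    (A A' : Matrix m m α) {B B' : Matrix n n α} (h : B * B' = 0) :
    (A ⊗ₖ B) * (A' ⊗ₖ B') = 0 := by
  rw [← mul_kronecker_mul, h, kronecker_zero]

theorem isIdempotentElem_vecMulVec [CommSemiring α] [Fintype n] {v w : n → α}
    (h : w ⬝ᵥ v = 1) : IsIdempotentElem (vecMulVec v w) := by
  rw [IsIdempotentElem, vecMulVec_mul_vecMulVec, h, one_smul]

theorem vecMulVec_mul_vecMulVec_eq_zero [CommSemiring α] [Fintype n] {v w v' w' : n → α}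
    (h : w ⬝ᵥ v' = 0) : vecMulVec v w * vecMulVec v' w' = 0 := by
  rw [vecMulVec_mul_vecMulVec, h, zero_smul, vecMulVec_zero]

end Matrix

section Exponential

variable {𝔸 : Type*} [NormedRing 𝔸] [NormedAlgebra ℂ 𝔸] [CompleteSpace 𝔸]

theorem exp_smul_of_isIdempotentElem {e : 𝔸} (he : IsIdempotentElem e) (a : ℂ) :
    exp (a • e) = 1 + (Complex.exp a - 1) • e := by
  have hterm : ∀ n : ℕ, ((n.factorial : ℂ)⁻¹ • (a • e) ^ n) =
      ((n.factorial : ℂ)⁻¹ • a ^ n) • e + if n = 0 then 1 - e else 0 := by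
    rintro (_ | n)
    · simp
    · simp [smul_pow, he.pow_succ_eq, smul_smul]
  have hsum := ((exp_series_hasSum_exp' (𝕂 := ℂ) a).smul_const e).add (hasSum_ite_eq 0 (1 - e))
  rw [← Complex.exp_eq_exp_ℂ] at hsum
  refine (exp_series_hasSum_exp' (𝕂 := ℂ) (a • e)).unique ?_
  simp_rw [hterm]
  convert hsum using 1
  rw [sub_smul, one_smul]
  abel

theorem exp_smul_add_smul_of_mul_eq_zero {e f : 𝔸} (he : IsIdempotentElem e)
    (hf : IsIdempotentElem f) (hef : e * f = 0) (hfe : f * e = 0) (a b : ℂ) :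
    exp (a • e + b • f) = 1 + (Complex.exp a - 1) • e + (Complex.exp b - 1) • f := by
  let _ : NormedAlgebra ℚ 𝔸 := .restrictScalars ℚ ℂ 𝔸
  have hcomm : Commute (a • e) (b • f) := by
    simp only [Commute, SemiconjBy, smul_mul_smul_comm, hef, hfe, smul_zero]
  rw [exp_add_of_commute hcomm, exp_smul_of_isIdempotentElem he,
    exp_smul_of_isIdempotentElem hf]
  simp only [add_mul, mul_add, one_mul, mul_one, smul_mul_smul_comm, hef, smul_zero, add_zero]

end Exponential

theorem cexp_two_mul_I_mul_eq_one {x : ℝ} {k : ℤ} (hx : x = k * Real.pi) :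
    Complex.exp (2 * (I * x)) = 1 := by
  rw [hx, ← Complex.exp_int_mul_two_pi_mul_I k]
  push_cast
  ring_nf

theorem eq_one_of_inv_eq_self_of_pow_eq_one {K : Type*} [Field K] {ζ : K} {q : ℕ} (hq : Odd q)
    (hζq : ζ ^ q = 1) (hinv : ζ⁻¹ = ζ) : ζ = 1 := by
  rcases inv_eq_self₀.1 hinv with h | h | h
  · rw [h, hq.neg_one_pow] at hζq
    rw [h, hζq]
  · rw [h, zero_pow hq.pos.ne'] at hζq
    exact absurd hζq zero_ne_one
  · exact h

section Transition

variable {V : Type*} [Fintype V] {A : Matrix V V ℂ} {u v : V} {t : ℝ}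

theorem transMatrix_eq_exp [DecidableEq V] (A : Matrix V V ℂ) (t : ℝ) :
    transMatrix A t = exp ((I * t) • A) := by
  unfold transMatrix
  congr
  exact Subsingleton.elim _ _

theorem mulVec_stdVec (M : Matrix V V ℂ) (u w : V) : (M *ᵥ stdVec u) w = M w u := by
  classical
  rw [stdVec, mulVec_single_one]
  rfl

theorem hasQFR.transMatrix_apply_ne_zero (h : hasQFR A u v t) : transMatrix A t v u ≠ 0 := by
  classical
  obtain ⟨huv, α, β, hβ, heq⟩ := h
  have hv := congrFun heq v
  rw [mulVec_stdVec] at hv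
  simp only [Pi.add_apply, Pi.smul_apply, smul_eq_mul, stdVec, Pi.single_eq_of_ne huv.symm,
    Pi.single_eq_same] at hv
  simpa [hv] using hβ

theorem hasQFR.transMatrix_apply_eq_zero (h : hasQFR A u v t) {w : V} (hwu : w ≠ u)
    (hwv : w ≠ v) : transMatrix A t w u = 0 := by
  classical
  obtain ⟨-, α, β, -, heq⟩ := h
  have hw := congrFun heq w
  rw [mulVec_stdVec] at hw
  simpa [stdVec, Pi.single_eq_of_ne hwu, Pi.single_eq_of_ne hwv] using hw

end Transition

section UnitaryCayley

variable {R S : Type*} [CommRing R] [CommRing S]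

theorem unitaryCayleyGraph_adj_iff [Nontrivial R] {a b : R} :
    (unitaryCayleyGraph R).Adj a b ↔ IsUnit (a - b) :=
  ⟨And.right, fun h => ⟨sub_ne_zero.1 h.ne_zero, h⟩⟩

theorem ucMatrix_apply [Nontrivial R] [DecidablePred (IsUnit : R → Prop)] (a b : R) :
    ucMatrix R a b = if IsUnit (a - b) then 1 else 0 := by
  classical
  rw [ucMatrix, SimpleGraph.adjMatrix_apply]
  exact if_congr unitaryCayleyGraph_adj_iff rfl rfl

theorem ucMatrix_prod [Nontrivial R] [Nontrivial S] :
    ucMatrix (R × S) = ucMatrix R ⊗ₖ ucMatrix S := by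
  classical
  ext ⟨a, a'⟩ ⟨b, b'⟩
  simp only [ucMatrix_apply, kronecker_apply, Prod.isUnit_iff, Prod.mk_sub_mk,
    ite_zero_mul_ite_zero, mul_one]

end UnitaryCayley

section Projections

noncomputable def meanProj (n : Type*) [Fintype n] : Matrix n n ℂ :=
  vecMulVec (fun _ => (Fintype.card n : ℂ)⁻¹) 1

theorem isIdempotentElem_meanProj (n : Type*) [Fintype n] [Nonempty n] :
    IsIdempotentElem (meanProj n) :=
  isIdempotentElem_vecMulVec (by simp [dotProduct])

theorem ucMatrix_field (F : Type*) [Field F] [Fintype F] [DecidableEq F] :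
    ucMatrix F = (Fintype.card F : ℂ) • meanProj F - 1 := by
  classical
  have hq : (Fintype.card F : ℂ) ≠ 0 := Nat.cast_ne_zero.2 Fintype.card_ne_zero
  ext a b
  simp only [ucMatrix_apply, isUnit_iff_ne_zero, sub_ne_zero, Matrix.sub_apply,
    Matrix.smul_apply, one_apply, meanProj, vecMulVec_apply, Pi.one_apply, mul_one, smul_eq_mul,
    mul_inv_cancel₀ hq]
  split_ifs <;> simp_all

instance : Fact (1 < 4) := ⟨by norm_num⟩

def signVec : ZMod 4 → ℂ := fun a => (-1) ^ a.val

noncomputable def altProj : Matrix (ZMod 4) (ZMod 4) ℂ :=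
  vecMulVec ((4 : ℂ)⁻¹ • signVec) signVec

theorem sum_signVec : ∑ a, signVec a = 0 := by
  change ∑ a : Fin 4, (-1 : ℂ) ^ a.val = 0
  norm_num [Fin.sum_univ_four]

theorem signVec_mul (a b : ZMod 4) :
    signVec a * signVec b = if IsUnit (a - b) then -1 else 1 := by
  have hunit : IsUnit (a - b) ↔ Odd (a.val + b.val) := by revert a b; decide
  rw [signVec, signVec, ← pow_add]
  split_ifs with h
  · exact (hunit.1 h).neg_one_pow
  · exact (Nat.not_odd_iff_even.1 (hunit.not.1 h)).neg_one_pow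

theorem isIdempotentElem_altProj : IsIdempotentElem altProj :=
  isIdempotentElem_vecMulVec (by simp [dotProduct, mul_left_comm _ (4 : ℂ)⁻¹, signVec_mul])

theorem meanProj_mul_altProj : meanProj (ZMod 4) * altProj = 0 :=
  vecMulVec_mul_vecMulVec_eq_zero (by simp [dotProduct, ← Finset.mul_sum, sum_signVec])

theorem altProj_mul_meanProj : altProj * meanProj (ZMod 4) = 0 :=
  vecMulVec_mul_vecMulVec_eq_zero (by simp [dotProduct, ← Finset.sum_mul, sum_signVec])

theorem ucMatrix_zmod_four :
    ucMatrix (ZMod 4) = (2 : ℂ) • meanProj (ZMod 4) - (2 : ℂ) • altProj := by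
  ext a b
  simp only [ucMatrix_apply, Matrix.sub_apply, Matrix.smul_apply, meanProj, altProj,
    vecMulVec_apply, Pi.smul_apply, Pi.one_apply, smul_eq_mul, mul_assoc, signVec_mul]
  split_ifs <;> norm_num

theorem exists_isUnit_add_ne_zmod_four (b c : ZMod 4) : ∃ d, IsUnit d ∧ b + d ≠ c := by
  revert b c
  decide

end Projections

section Spectral

theorem exp_smul_kronecker_ucMatrix_zmod_four {n : Type*} [Fintype n] [DecidableEq n]
    {P : Matrix n n ℂ} (hP : IsIdempotentElem P) (a : ℂ) :
    exp (a • (P ⊗ₖ ucMatrix (ZMod 4))) =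
      1 + (Complex.exp (2 * a) - 1) • (P ⊗ₖ meanProj (ZMod 4)) +
        (Complex.exp (-(2 * a)) - 1) • (P ⊗ₖ altProj) := by
  have hsplit : a • (P ⊗ₖ ucMatrix (ZMod 4)) =
      (2 * a) • (P ⊗ₖ meanProj (ZMod 4)) + (-(2 * a)) • (P ⊗ₖ altProj) := by
    rw [ucMatrix_zmod_four, kronecker_sub, kronecker_smul, kronecker_smul]
    module
  rw [hsplit]
  -- any Banach-algebra norm on matrices will do: `exp` itself does not depend on it
  open scoped Matrix.Norms.Operator in
  exact exp_smul_add_smul_of_mul_eq_zero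
    (isIdempotentElem_kronecker hP (isIdempotentElem_meanProj _))
    (isIdempotentElem_kronecker hP isIdempotentElem_altProj)
    (kronecker_mul_kronecker_eq_zero _ _ meanProj_mul_altProj)
    (kronecker_mul_kronecker_eq_zero _ _ altProj_mul_meanProj) _ _

variable (F : Type*) [Field F] [Fintype F] {t : ℝ} {k : ℤ}

theorem transMatrix_ucMatrix_field_prod_zmod_four [DecidableEq F]
    (ht : Fintype.card F * t = k * Real.pi) :
    transMatrix (ucMatrix (F × ZMod 4)) t =
      1 + ((Complex.exp (2 * (I * t)))⁻¹ - 1) • (1 ⊗ₖ meanProj (ZMod 4)) +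
        (Complex.exp (2 * (I * t)) - 1) • (1 ⊗ₖ altProj) := by
  have hsplit : (I * t) • ucMatrix (F × ZMod 4) =
      (I * ↑(Fintype.card F * t)) • (meanProj F ⊗ₖ ucMatrix (ZMod 4)) +
        (-(I * t)) • (1 ⊗ₖ ucMatrix (ZMod 4)) := by
    rw [ucMatrix_prod, ucMatrix_field, sub_kronecker, smul_kronecker]
    push_cast
    module
  have hcomm : Commute (meanProj F ⊗ₖ ucMatrix (ZMod 4)) (1 ⊗ₖ ucMatrix (ZMod 4)) := by
    simp only [Commute, SemiconjBy, ← mul_kronecker_mul, mul_one, one_mul]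
  rw [transMatrix_eq_exp, hsplit, exp_add_of_commute _ _ ((hcomm.smul_left _).smul_right _),
    exp_smul_kronecker_ucMatrix_zmod_four (isIdempotentElem_meanProj F),
    exp_smul_kronecker_ucMatrix_zmod_four IsIdempotentElem.one, Complex.exp_neg,
    cexp_two_mul_I_mul_eq_one ht, mul_neg, Complex.exp_neg]
  simp

theorem transMatrix_ucMatrix_field_prod_zmod_four_apply_of_isUnit
    (ht : Fintype.card F * t = k * Real.pi) (a : F) {b d : ZMod 4} (hd : IsUnit d) :
    transMatrix (ucMatrix (F × ZMod 4)) t (a, b + d) (a, b) =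
      ((Complex.exp (2 * (I * t)))⁻¹ - Complex.exp (2 * (I * t))) / 4 := by
  classical
  have hbd : (a, b + d) ≠ (a, b) := by simpa using hd.ne_zero
  simp [transMatrix_ucMatrix_field_prod_zmod_four F ht, one_apply_ne hbd, meanProj, altProj,
    vecMulVec_apply, signVec_mul, hd]
  ring

end Spectral

/-- for a finite field `F` of odd cardinality `q`, the unitary Cayley graph
of `F × ℤ/4` has no QFR at any time `kπ/q`, `k ∈ ℤ`. -/
theorem no_qfr_field_times_zmod_four (F : Type*) [Field F] [Fintype F] (q : ℕ)
    (hq : Fintype.card F = q) (hodd : Odd q) (k : ℤ) (u v : F × ZMod 4) :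
    ¬ hasQFR (ucMatrix (F × ZMod 4)) u v ((k : ℝ) * Real.pi / q) := by
  classical
  subst hq
  obtain ⟨a, b⟩ := u
  intro hqfr
  set t : ℝ := k * Real.pi / Fintype.card F
  have ht : Fintype.card F * t = k * Real.pi :=
    mul_div_cancel₀ _ (Nat.cast_ne_zero.2 Fintype.card_ne_zero)
  obtain ⟨d, hd, hdv⟩ := exists_isUnit_add_ne_zmod_four b v.2
  have hentry := hqfr.transMatrix_apply_eq_zero (w := (a, b + d)) (by simpa using hd.ne_zero)
    (fun h => hdv (congrArg Prod.snd h))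
  rw [transMatrix_ucMatrix_field_prod_zmod_four_apply_of_isUnit F ht a hd, div_eq_zero_iff,
    sub_eq_zero] at hentry
  have hH := transMatrix_ucMatrix_field_prod_zmod_four F ht
  set ζ := Complex.exp (2 * (I * t))
  have hζq : ζ ^ Fintype.card F = 1 := by
    rw [← Complex.exp_nat_mul, ← cexp_two_mul_I_mul_eq_one ht]
    push_cast
    ring_nf
  have hζ : ζ = 1 :=
    eq_one_of_inv_eq_self_of_pow_eq_one hodd hζq (hentry.resolve_right (by norm_num))
  apply hqfr.transMatrix_apply_ne_zero
  simp [hH, hζ, one_apply_ne hqfr.1.symm]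
end
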